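/- Let D_m(x) := (1/m) Σ_{l=1}^m cos((l−1/2)πx) and fix p > 1 and a ≥ 0. There exists a constant C_p (depending only on p) such that: for any positive integer m, any ρ > 0 with mρ ≤ 2a, any c ∈ ℝ, and any measurable function φ : ℝ → ℝ with |φ(u) − u| ≤ ρ for all u, one has m · ∫_{c−1}^{c+1} |D_m(φ(u) − c)|^p du ≤ C_p (for m sufficiently large depending only on a and p). -/

import Mathlib

open Real Finset MeasureTheory

/-!
Telescoping `2 sin(πx/2) cos((l - 1/2)πx) = sin(lπx) - sin((l - 1)πx)` gives
`2m |sin(πx/2)| |D_m(x)| ≤ 1`, and with `|D_m| ≤ 1` and Jordan's inequality this yields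
`|D_m(x)| ≤ 2 / (1 + 2mt)` whenever `t ≤ |x| ≤ 2 - t`. After shifting by `c`, the point
`x = φ(u + c) - c` lies within `ρ` of `u ∈ [-1, 1]`, so `t = (|u| - ρ)₊` is admissible (`m > 2a`
forces `ρ < 1`). Integrating the envelope `2^p (1 + 2m(|u| - ρ)₊)^(-p)` over `[-1, 1]` gives at
most `2^(p+1) (ρ + 1 / (2m(p - 1)))`, and `mρ ≤ 2a` bounds `m` times this by `2^p (4a + 1/(p-1))`.
-/

/-- The half-integer-frequency Dirichlet-type kernel
`D_m(x) = (1/m) Σ_{l=1}^m cos((l−1/2)πx)`. -/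
noncomputable def Dm (m : ℕ) (x : ℝ) : ℝ :=
  (1 / (m : ℝ)) * ∑ l ∈ Finset.Icc 1 m, Real.cos (((l : ℝ) - 1 / 2) * π * x)

lemma two_mul_sin_mul_sum_cos (m : ℕ) (x : ℝ) :
    2 * sin (π * x / 2) * ∑ l ∈ Icc 1 m, cos (((l : ℝ) - 1 / 2) * π * x) = sin (m * π * x) := by
  induction m with
  | zero => simp
  | succ n ih =>
    have telescope : sin ((n + 1) * π * x) - sin (n * π * x) =
        2 * sin (π * x / 2) * cos ((((n + 1 : ℕ) : ℝ) - 1 / 2) * π * x) := by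
      rw [sin_sub_sin]
      push_cast
      ring_nf
    rw [sum_Icc_succ_top (by omega), mul_add, ih]
    push_cast at telescope ⊢
    linarith

lemma natCast_mul_Dm (m : ℕ) (x : ℝ) :
    m * Dm m x = ∑ l ∈ Icc 1 m, cos (((l : ℝ) - 1 / 2) * π * x) := by
  rcases eq_or_ne m 0 with rfl | hm
  · simp [Dm]
  · rw [Dm, ← mul_assoc, mul_one_div_cancel (by exact_mod_cast hm), one_mul]

lemma abs_Dm_le_one (m : ℕ) (x : ℝ) : |Dm m x| ≤ 1 := by
  rcases Nat.eq_zero_or_pos m with rfl | hm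
  · simp [Dm]
  have hm' : (0 : ℝ) < m := by exact_mod_cast hm
  refine le_of_mul_le_mul_left ?_ hm'
  calc m * |Dm m x| = |∑ l ∈ Icc 1 m, cos (((l : ℝ) - 1 / 2) * π * x)| := by
        rw [← natCast_mul_Dm, abs_mul, Nat.abs_cast]
    _ ≤ ∑ l ∈ Icc 1 m, |cos (((l : ℝ) - 1 / 2) * π * x)| := abs_sum_le_sum_abs _ _
    _ ≤ ∑ l ∈ Icc 1 m, (1 : ℝ) := sum_le_sum fun _ _ => abs_cos_le_one _
    _ = m * 1 := by simp

lemma mul_abs_sin_mul_abs_Dm_le_one (m : ℕ) (x : ℝ) :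
    2 * m * |sin (π * x / 2)| * |Dm m x| ≤ 1 :=
  calc 2 * m * |sin (π * x / 2)| * |Dm m x|
      = |2 * sin (π * x / 2) * (m * Dm m x)| := by
        rw [abs_mul, abs_mul, abs_mul, abs_two, Nat.abs_cast]; ring
    _ = |sin (m * π * x)| := by rw [natCast_mul_Dm, two_mul_sin_mul_sum_cos]
    _ ≤ 1 := abs_sin_le_one _

lemma le_abs_sin_pi_mul_div_two {x t : ℝ} (ht : 0 ≤ t) (h₁ : t ≤ |x|) (h₂ : |x| ≤ 2 - t) :
    t ≤ |sin (π * x / 2)| := by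
  have jordan : ∀ y, 0 ≤ y → y ≤ 1 → y ≤ sin (π * y / 2) := fun y hy₀ hy₁ => by
    have := mul_le_sin (x := π * y / 2) (by positivity) (by nlinarith [pi_pos])
    rwa [show 2 / π * (π * y / 2) = y by field_simp] at this
  have sin_abs : |sin (π * x / 2)| = |sin (π * |x| / 2)| := by
    rcases abs_choice x with h | h <;> rw [h]
    rw [mul_neg, neg_div, sin_neg, abs_neg]
  rw [sin_abs]
  refine le_trans ?_ (le_abs_self _)
  rcases le_total |x| 1 with h | h
  · exact h₁.trans (jordan _ (abs_nonneg x) h)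
  · rw [show π * |x| / 2 = π - π * (2 - |x|) / 2 by ring, sin_pi_sub]
    exact (jordan (2 - |x|) (by linarith) (by linarith)).trans' (by linarith)

lemma abs_Dm_le_two_div {m : ℕ} {x t : ℝ} (ht : 0 ≤ t) (h₁ : t ≤ |x|) (h₂ : |x| ≤ 2 - t) :
    |Dm m x| ≤ 2 / (1 + 2 * m * t) := by
  have hsin := mul_abs_sin_mul_abs_Dm_le_one m x
  have hle : 2 * m * t * |Dm m x| ≤ 2 * m * |sin (π * x / 2)| * |Dm m x| := by
    gcongr
    exact le_abs_sin_pi_mul_div_two ht h₁ h₂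
  rw [le_div_iff₀ (by positivity)]
  linarith [abs_Dm_le_one m x]

lemma abs_Dm_rpow_le {m : ℕ} {p ρ x w : ℝ} (hp : 0 ≤ p) (hρ : ρ ≤ 1) (hw : |w| ≤ 1)
    (hx : |x - w| ≤ ρ) :
    |Dm m x| ^ p ≤ 2 ^ p * (1 + 2 * m * max (|w| - ρ) 0) ^ (-p) := by
  have hden : 0 < 1 + 2 * m * max (|w| - ρ) 0 := by positivity
  have hD : |Dm m x| ≤ 2 / (1 + 2 * m * max (|w| - ρ) 0) := by
    have hxw := abs_sub_abs_le_abs_sub x w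
    have hwx := abs_sub_abs_le_abs_sub w x
    rw [abs_sub_comm] at hwx
    apply abs_Dm_le_two_div (le_max_right _ _) <;>
      rcases max_cases (|w| - ρ) 0 with ⟨h, _⟩ | ⟨h, _⟩ <;> rw [h] <;> linarith [abs_nonneg x]
  calc |Dm m x| ^ p ≤ (2 / (1 + 2 * m * max (|w| - ρ) 0)) ^ p := by gcongr
    _ = _ := by rw [div_rpow zero_le_two hden.le, rpow_neg hden.le, div_eq_mul_inv]

lemma intervalIntegral.integral_comp_abs {f : ℝ → ℝ} (hf : Continuous f) {a : ℝ} (ha : 0 ≤ a) :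
    ∫ w in -a..a, f |w| = 2 * ∫ w in 0..a, f w := by
  have hint : ∀ b c : ℝ, IntervalIntegrable (fun w => f |w|) volume b c := fun b c =>
    (hf.comp continuous_abs).intervalIntegrable b c
  have hpos : ∫ w in 0..a, f |w| = ∫ w in 0..a, f w :=
    intervalIntegral.integral_congr fun w hw => by
      rw [Set.uIcc_of_le ha] at hw
      simp only [abs_of_nonneg hw.1]
  have hneg : ∫ w in -a..0, f |w| = ∫ w in 0..a, f |w| := by
    have h := intervalIntegral.integral_comp_neg (a := 0) (b := a) (fun w => f |w|)
    simp only [abs_neg, neg_zero] at h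
    exact h.symm
  rw [← intervalIntegral.integral_add_adjacent_intervals (hint _ _) (hint _ _), hneg, hpos, two_mul]

lemma integral_one_add_mul_rpow_neg_le {m p L : ℝ} (hm : 0 < m) (hp : 1 < p) (hL : 0 ≤ L) :
    ∫ s in 0..L, (1 + m * s) ^ (-p) ≤ 1 / (m * (p - 1)) := by
  have hB : 1 ≤ m * L + 1 := by nlinarith
  have h0 : (0 : ℝ) ∉ Set.uIcc 1 (m * L + 1) := by
    rw [Set.uIcc_of_le hB]; exact fun h => by linarith [h.1]
  calc ∫ s in 0..L, (1 + m * s) ^ (-p)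
      = m⁻¹ * (((m * L + 1) ^ (-p + 1) - 1) / (-p + 1)) := by
        simp_rw [add_comm (1 : ℝ)]
        rw [intervalIntegral.integral_comp_mul_add (fun x => x ^ (-p)) hm.ne', mul_zero, zero_add,
          integral_rpow (Or.inr ⟨by linarith, h0⟩), one_rpow, smul_eq_mul]
    _ = (1 - (m * L + 1) ^ (1 - p)) / (m * (p - 1)) := by
        rw [neg_add_eq_sub]
        field_simp
        rw [div_eq_div_iff (sub_ne_zero.mpr hp.ne) (sub_ne_zero.mpr hp.ne')]
        ring
    _ ≤ 1 / (m * (p - 1)) := by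
        gcongr
        linarith [rpow_nonneg (by linarith : (0 : ℝ) ≤ m * L + 1) (1 - p)]

lemma integral_one_add_mul_max_sub_rpow_neg_le {m p ρ : ℝ} (hm : 0 < m) (hp : 1 < p)
    (hρ₀ : 0 ≤ ρ) (hρ₁ : ρ ≤ 1) :
    ∫ w in 0..1, (1 + m * max (w - ρ) 0) ^ (-p) ≤ ρ + 1 / (m * (p - 1)) := by
  have hcont : Continuous fun w : ℝ => (1 + m * max (w - ρ) 0) ^ (-p) :=
    (by fun_prop : Continuous fun w : ℝ => 1 + m * max (w - ρ) 0).rpow_const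
      fun w => Or.inl (by positivity)
  have hflat : ∫ w in 0..ρ, (1 + m * max (w - ρ) 0) ^ (-p) = ρ := by
    rw [intervalIntegral.integral_congr (g := fun _ => (1 : ℝ)) fun w hw => ?_]
    · simp
    · rw [Set.uIcc_of_le hρ₀] at hw
      simp [max_eq_right (sub_nonpos.mpr hw.2)]
  have htail : ∫ w in ρ..1, (1 + m * max (w - ρ) 0) ^ (-p) =
      ∫ s in 0..1 - ρ, (1 + m * s) ^ (-p) := by
    have shift := intervalIntegral.integral_comp_sub_right (a := ρ) (b := 1)
      (fun s => (1 + m * s) ^ (-p)) ρ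
    rw [sub_self] at shift
    rw [← shift]
    refine intervalIntegral.integral_congr fun w hw => ?_
    rw [Set.uIcc_of_le hρ₁] at hw
    simp only [max_eq_left (sub_nonneg.mpr hw.1)]
  rw [← intervalIntegral.integral_add_adjacent_intervals (hcont.intervalIntegrable 0 ρ)
    (hcont.intervalIntegrable ρ 1), hflat, htail]
  gcongr
  exact integral_one_add_mul_rpow_neg_le hm hp (sub_nonneg.mpr hρ₁)

lemma intervalIntegral.integral_mono_on_of_nonneg {f g : ℝ → ℝ} {a b : ℝ} (hab : a ≤ b)
    (hf : ∀ x ∈ Set.Icc a b, 0 ≤ f x) (h : ∀ x ∈ Set.Icc a b, f x ≤ g x)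
    (hg : IntervalIntegrable g volume a b) :
    ∫ x in a..b, f x ≤ ∫ x in a..b, g x := by
  rw [intervalIntegral.integral_of_le hab, intervalIntegral.integral_of_le hab]
  exact setIntegral_mono_of_nonneg (fun x hx => hf x (Set.Ioc_subset_Icc_self hx))
    (fun x hx => h x (Set.Ioc_subset_Icc_self hx)) hg.1

theorem stmt11_general (p : ℝ) (hp : 1 < p) (a : ℝ) :
    ∃ C : ℝ, ∃ M : ℕ, ∀ m : ℕ, M ≤ m → ∀ ρ : ℝ, 0 < ρ → (m : ℝ) * ρ ≤ 2 * a →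
      ∀ c : ℝ, ∀ φ : ℝ → ℝ, Measurable φ → (∀ u : ℝ, |φ u - u| ≤ ρ) →
        (m : ℝ) * ∫ u in (c - 1)..(c + 1), |Dm m (φ u - c)| ^ p ≤ C := by
  refine ⟨2 ^ p * (4 * a + 1 / (p - 1)), ⌈2 * a⌉₊ + 1, fun m hm ρ hρ hmρ c φ _ hφ => ?_⟩
  have hm₀ : (0 : ℝ) < m := by exact_mod_cast (Nat.succ_pos _).trans_le hm
  have hρ₁ : ρ ≤ 1 := by
    have : 2 * a < m := (Nat.le_ceil _).trans_lt (by exact_mod_cast hm)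
    nlinarith
  have hbound : ∀ w ∈ Set.Icc (-1 : ℝ) 1,
      |Dm m (φ (w + c) - c)| ^ p ≤ 2 ^ p * (1 + 2 * m * max (|w| - ρ) 0) ^ (-p) :=
    fun w hw => abs_Dm_rpow_le (by linarith) hρ₁ (abs_le.mpr hw)
      (by simpa [sub_sub, add_comm] using hφ (w + c))
  have henv : Continuous fun w : ℝ => (1 + 2 * m * max (w - ρ) 0) ^ (-p) :=
    (by fun_prop : Continuous fun w : ℝ => 1 + 2 * m * max (w - ρ) 0).rpow_const
      fun w => Or.inl (by positivity)
  rw [show c - 1 = -1 + c by ring, show c + 1 = 1 + c by ring,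
    ← intervalIntegral.integral_comp_add_right]
  calc m * ∫ w in -1..1, |Dm m (φ (w + c) - c)| ^ p
      ≤ m * ∫ w in -1..1, 2 ^ p * (1 + 2 * m * max (|w| - ρ) 0) ^ (-p) := by
        gcongr
        exact intervalIntegral.integral_mono_on_of_nonneg (by norm_num)
          (fun _ _ => by positivity) hbound
          ((continuous_const.mul (henv.comp continuous_abs)).intervalIntegrable _ _)
    _ = 2 ^ p * (2 * m) * ∫ w in 0..1, (1 + 2 * m * max (w - ρ) 0) ^ (-p) := by
        rw [intervalIntegral.integral_const_mul,
          intervalIntegral.integral_comp_abs henv zero_le_one]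
        ring
    _ ≤ 2 ^ p * (2 * m) * (ρ + 1 / (2 * m * (p - 1))) := by
        gcongr
        exact integral_one_add_mul_max_sub_rpow_neg_le (by positivity) hp hρ.le hρ₁
    _ = 2 ^ p * (2 * (m * ρ) + 1 / (p - 1)) := by
        field_simp
    _ ≤ 2 ^ p * (4 * a + 1 / (p - 1)) :=
        mul_le_mul_of_nonneg_left (by linarith) (by positivity)

theorem stmt11 (p : ℝ) (hp : 1 < p) (a : ℝ) (ha : 0 ≤ a) :
    ∃ C : ℝ, ∃ M : ℕ, ∀ m : ℕ, M ≤ m → ∀ ρ : ℝ, 0 < ρ → (m : ℝ) * ρ ≤ 2 * a →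
      ∀ c : ℝ, ∀ φ : ℝ → ℝ, Measurable φ → (∀ u : ℝ, |φ u - u| ≤ ρ) →
        (m : ℝ) * ∫ u in (c - 1)..(c + 1), |Dm m (φ u - c)| ^ p ≤ C :=
  stmt11_general p hp a
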